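/- arXiv:1705.07565 — 2 statements merged into one kernel-verified Lean document; each statement's English description precedes it below -/
import Mathlib

section
/- Consider a pruned feed-forward ReLU network with L layers defined recursively by Ỹ⁰ = X and Ỹˡ = σ(Ŵₗᵀ Ỹ^{l−1}), and the original outputs Yˡ of the unpruned reference. Suppose for each layer l the layer-wise error satisfies (1/√n)‖σ(Ŵₗᵀ Y^{l−1}) − Yˡ‖_F ≤ εˡ. Then the accumulated output error satisfies (1/√n)‖Ỹᴸ − Yᴸ‖_F ≤ Σ_{k=1}^{L−1} (∏_{l=k+1}^{L} ‖Ŵₗ‖_F) ε^k + ε^L. -/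
/-!
Write `eˡ = (1/√n)‖Ỹˡ − Yˡ‖_F`. Inserting `σ(Ŵₗᵀ Yˡ⁻¹)` between `Ỹˡ = σ(Ŵₗᵀ Ỹˡ⁻¹)` and `Yˡ`, the
triangle inequality, the fact that ReLU is 1-Lipschitz entrywise and submultiplicativity of the
Frobenius norm give `eˡ ≤ ‖Ŵₗ‖_F eˡ⁻¹ + εˡ`. Unrolling this linear recursion from `e⁰ = 0`
yields the stated sum.
-/

open Matrix

noncomputable def frob {m n : Type*} [Fintype m] [Fintype n] (A : Matrix m n ℝ) : ℝ :=
  Real.sqrt (∑ i, ∑ j, (A i j) ^ 2)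

/-- The accumulated pruned outputs: `Ỹ⁰ = X = Y 0`, `Ỹˡ⁺¹ = σ(Ŵₗᵀ Ỹˡ)`. -/
noncomputable def prunedOutput (d : ℕ → ℕ) (n : ℕ)
    (W : ∀ l : ℕ, Matrix (Fin (d l)) (Fin (d (l + 1))) ℝ)
    (X : Matrix (Fin (d 0)) (Fin n) ℝ) : (l : ℕ) → Matrix (Fin (d l)) (Fin n) ℝ
  | 0 => X
  | (l + 1) => ((W l)ᵀ * prunedOutput d n W X l).map (fun x => max x 0)

section Frobenius

attribute [local instance] Matrix.frobeniusNormedAddCommGroup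

variable {k m n : Type*} [Fintype k] [Fintype m] [Fintype n]

lemma frob_eq_frobenius_norm (A : Matrix m n ℝ) : frob A = ‖A‖ := by
  simp only [frob, frobenius_norm_def, Real.norm_eq_abs, Real.rpow_two, sq_abs,
    Real.sqrt_eq_rpow]

lemma frob_nonneg (A : Matrix m n ℝ) : 0 ≤ frob A :=
  Real.sqrt_nonneg _

lemma frob_sub_le_frob_sub_add (A B C : Matrix m n ℝ) :
    frob (A - C) ≤ frob (A - B) + frob (B - C) := by
  simp only [frob_eq_frobenius_norm]
  exact norm_sub_le_norm_sub_add_norm_sub A B C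

lemma frob_transpose_mul_le (W : Matrix k m ℝ) (M : Matrix k n ℝ) :
    frob (Wᵀ * M) ≤ frob W * frob M := by
  simpa only [frob_eq_frobenius_norm, frobenius_norm_transpose] using frobenius_norm_mul Wᵀ M

end Frobenius

lemma frob_map_sub_map_le {m n : Type*} [Fintype m] [Fintype n] {f : ℝ → ℝ}
    (hf : LipschitzWith 1 f) (A B : Matrix m n ℝ) :
    frob (A.map f - B.map f) ≤ frob (A - B) := by
  refine Real.sqrt_le_sqrt (Finset.sum_le_sum fun i _ => Finset.sum_le_sum fun j _ => ?_)
  have h := hf.dist_le_mul (A i j) (B i j)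
  rw [NNReal.coe_one, one_mul, Real.dist_eq, Real.dist_eq] at h
  simpa only [Matrix.sub_apply, map_apply, sq_abs] using pow_le_pow_left₀ (abs_nonneg _) h 2

lemma frob_relu_layer_sub_le {k m n : Type*} [Fintype k] [Fintype m] [Fintype n]
    (W : Matrix k m ℝ) (P Y : Matrix k n ℝ) (Y' : Matrix m n ℝ) :
    frob ((Wᵀ * P).map (fun x => max x 0) - Y') ≤
      frob W * frob (P - Y) + frob ((Wᵀ * Y).map (fun x => max x 0) - Y') :=
  calc frob ((Wᵀ * P).map (fun x => max x 0) - Y')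
      ≤ frob ((Wᵀ * P).map (fun x => max x 0) - (Wᵀ * Y).map (fun x => max x 0)) +
          frob ((Wᵀ * Y).map (fun x => max x 0) - Y') := frob_sub_le_frob_sub_add _ _ _
    _ ≤ frob (Wᵀ * (P - Y)) + frob ((Wᵀ * Y).map (fun x => max x 0) - Y') := by
        rw [Matrix.mul_sub]
        gcongr
        exact frob_map_sub_map_le (LipschitzWith.id.max_const 0) _ _
    _ ≤ frob W * frob (P - Y) + frob ((Wᵀ * Y).map (fun x => max x 0) - Y') := by
        gcongr
        exact frob_transpose_mul_le W _

lemma le_sum_prod_mul_of_le_mul_add {e w a : ℕ → ℝ} {L : ℕ} (h₀ : e 0 ≤ 0)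
    (hw : ∀ l, 0 ≤ w l) (hstep : ∀ l < L, e (l + 1) ≤ w l * e l + a (l + 1)) :
    e L ≤ ∑ k ∈ Finset.range L, (∏ l ∈ Finset.Ico (k + 1) L, w l) * a (k + 1) := by
  induction L with
  | zero => simpa using h₀
  | succ L ih =>
    have ih := ih fun l hl => hstep l (hl.trans L.lt_succ_self)
    calc e (L + 1) ≤ w L * e L + a (L + 1) := hstep L L.lt_succ_self
      _ ≤ w L * ∑ k ∈ Finset.range L, (∏ l ∈ Finset.Ico (k + 1) L, w l) * a (k + 1) +
            a (L + 1) := by gcongr; exact hw L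
      _ = ∑ k ∈ Finset.range (L + 1), (∏ l ∈ Finset.Ico (k + 1) (L + 1), w l) * a (k + 1) := by
        rw [Finset.sum_range_succ, Finset.mul_sum, Finset.Ico_self, Finset.prod_empty, one_mul]
        congr 1
        refine Finset.sum_congr rfl fun k hk => ?_
        rw [Finset.prod_Ico_succ_top (Finset.mem_range.mp hk)]
        ring

theorem accumulated_pruning_error_bound_general (d : ℕ → ℕ) (n L : ℕ)
    (W : ∀ l : ℕ, Matrix (Fin (d l)) (Fin (d (l + 1))) ℝ)
    (Y : ∀ l : ℕ, Matrix (Fin (d l)) (Fin n) ℝ)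
    (ε : ℕ → ℝ)
    (hε : ∀ l < L, (1 / Real.sqrt n) *
        frob (((W l)ᵀ * Y l).map (fun x => max x 0) - Y (l + 1)) ≤ ε (l + 1)) :
    (1 / Real.sqrt n) * frob (prunedOutput d n W (Y 0) L - Y L) ≤
      ∑ k ∈ Finset.range L, (∏ l ∈ Finset.Ico (k + 1) L, frob (W l)) * ε (k + 1) := by
  apply le_sum_prod_mul_of_le_mul_add
    (e := fun l => (1 / Real.sqrt n) * frob (prunedOutput d n W (Y 0) l - Y l))
  · simp [prunedOutput, frob]
  · exact fun l => frob_nonneg _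
  intro l hl
  calc (1 / Real.sqrt n) * frob (prunedOutput d n W (Y 0) (l + 1) - Y (l + 1))
        ≤ (1 / Real.sqrt n) * (frob (W l) * frob (prunedOutput d n W (Y 0) l - Y l) +
            frob (((W l)ᵀ * Y l).map (fun x => max x 0) - Y (l + 1))) := by
          gcongr
          exact frob_relu_layer_sub_le _ _ _ _
      _ ≤ frob (W l) * ((1 / Real.sqrt n) * frob (prunedOutput d n W (Y 0) l - Y l)) +
            ε (l + 1) := by
          linarith [hε l hl]

theorem accumulated_pruning_error_bound (d : ℕ → ℕ) (n L : ℕ) (hn : 0 < n) (hL : 0 < L)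
    (W : ∀ l : ℕ, Matrix (Fin (d l)) (Fin (d (l + 1))) ℝ)
    (Y : ∀ l : ℕ, Matrix (Fin (d l)) (Fin n) ℝ)
    (ε : ℕ → ℝ)
    (hε : ∀ l < L, (1 / Real.sqrt n) *
        frob (((W l)ᵀ * Y l).map (fun x => max x 0) - Y (l + 1)) ≤ ε (l + 1)) :
    (1 / Real.sqrt n) * frob (prunedOutput d n W (Y 0) L - Y L) ≤
      ∑ k ∈ Finset.range L, (∏ l ∈ Finset.Ico (k + 1) L, frob (W l)) * ε (k + 1) :=
  accumulated_pruning_error_bound_general d n L W Y ε hε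
end

section
/- Let H be symmetric positive definite of size m×m and consider for each index q the sensitivity L_q = θ_q² / (2 (H⁻¹)_{qq}) with given θ ∈ ℝ^m. If q* achieves the minimal sensitivity, then for every feasible perturbation δ with δ_{q*} = −θ_{q*}, the quadratic form satisfies (1/2) δᵀ H δ ≥ L_{q*}. -/
/-!
With `y = H⁻¹ e_q` one has `δᵀ H y = δ_q` and `yᵀ H y = (H⁻¹)_{qq}`, so Cauchy–Schwarz for the
inner product `⟪u, v⟫ = uᵀ H v` gives `δ_q² ≤ (δᵀ H δ) (H⁻¹)_{qq}`. For `δ_{q*} = -θ_{q*}` this is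
exactly `L_{q*} ≤ ½ δᵀ H δ`.
-/

open Matrix

namespace Matrix

variable {n : Type*} [Fintype n]

lemma PosSemidef.dotProduct_mulVec_sq_le {M : Matrix n n ℝ} (hM : M.PosSemidef) (x y : n → ℝ) :
    (x ⬝ᵥ (M *ᵥ y)) ^ 2 ≤ (x ⬝ᵥ (M *ᵥ x)) * (y ⬝ᵥ (M *ᵥ y)) := by
  let := M.toSeminormedAddCommGroup hM
  let := M.toInnerProductSpace hM
  have hinner (u v : n → ℝ) : inner ℝ u v = u ⬝ᵥ (M *ᵥ v) := by
    change (M *ᵥ v) ⬝ᵥ star u = _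
    rw [star_trivial, dotProduct_comm]
  simpa only [sq, hinner] using real_inner_mul_inner_self_le x y

lemma PosDef.sq_apply_le_dotProduct_mulVec_mul_inv_apply [DecidableEq n] {M : Matrix n n ℝ}
    (hM : M.PosDef) (x : n → ℝ) (i : n) : x i ^ 2 ≤ (x ⬝ᵥ (M *ᵥ x)) * M⁻¹ i i := by
  have hunit : IsUnit M.det := isUnit_iff_ne_zero.mpr hM.det_pos.ne'
  set y := M⁻¹ *ᵥ Pi.single i 1 with hy
  have hMy : M *ᵥ y = Pi.single i 1 := by
    rw [mulVec_mulVec, mul_nonsing_inv M hunit, one_mulVec]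
  have h := hM.posSemidef.dotProduct_mulVec_sq_le x y
  rwa [hMy, dotProduct_single, mul_one, dotProduct_single, mul_one, hy, mulVec_single_one] at h

end Matrix

theorem minimal_sensitivity_lower_bound_general {m : ℕ} (H : Matrix (Fin m) (Fin m) ℝ)
    (hH : H.PosDef) (θ : Fin m → ℝ) (qstar : Fin m) :
    ∀ δ : Fin m → ℝ, δ qstar = -θ qstar →
      (θ qstar) ^ 2 / (2 * H⁻¹ qstar qstar) ≤ (1 / 2) * (δ ⬝ᵥ (H *ᵥ δ)) := by
  intro δ hδ
  have hpos : 0 < H⁻¹ qstar qstar := hH.inv.diag_pos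
  rw [div_le_iff₀ (by positivity), show θ qstar ^ 2 = δ qstar ^ 2 by rw [hδ, neg_sq]]
  linarith [hH.sq_apply_le_dotProduct_mulVec_mul_inv_apply δ qstar]

theorem minimal_sensitivity_lower_bound {m : ℕ} (H : Matrix (Fin m) (Fin m) ℝ)
    (hH : H.PosDef) (θ : Fin m → ℝ) (qstar : Fin m)
    (hmin : ∀ q : Fin m, (θ qstar) ^ 2 / (2 * H⁻¹ qstar qstar) ≤ (θ q) ^ 2 / (2 * H⁻¹ q q)) :
    ∀ δ : Fin m → ℝ, δ qstar = -θ qstar →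
      (θ qstar) ^ 2 / (2 * H⁻¹ qstar qstar) ≤ (1 / 2) * (δ ⬝ᵥ (H *ᵥ δ)) :=
  minimal_sensitivity_lower_bound_general H hH θ qstar
end
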